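/- arXiv:1908.10942 — 4 statements merged into one kernel-verified Lean document; each statement's English description precedes it below -/
import Mathlib

section
/- Let P be a directed walk from a vertex s to a vertex t in a graph with positive edge lengths that conflicts with itself (uses some edge in both directions). Then there exists a directed walk P' from s to t that is strictly shorter than P, uses only arcs used by P, and is a simple directed path that does not conflict with itself. -/
variable {V : Type*}

/-- The arcs (consecutive vertex pairs) of a directed walk, represented as a list of vertices. -/
def arcs (P : List V) : List (V × V) := P.zip P.tail

/-- The directed walk `P` uses the arc `uv`. -/
def UsesArc (P : List V) (u v : V) : Prop := (u, v) ∈ arcs P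

/-- The directed walk `P` uses the undirected edge `{u,v}` (in either direction). -/
def UsesEdge (P : List V) (u v : V) : Prop := UsesArc P u v ∨ UsesArc P v u

/-- Two directed walks conflict if some edge `{u,v}` is traversed as `uv` by one
and as `vu` by the other. -/
def Conflict (P Q : List V) : Prop := ∃ u v, UsesArc P u v ∧ UsesArc Q v u

/-- Two directed walks are edge-disjoint if no undirected edge is used by both
(in either direction). -/
def EdgeDisjointW (P Q : List V) : Prop := ∀ u v, ¬ (UsesEdge P u v ∧ UsesEdge Q u v)

/-- `x` strictly precedes `y` on the walk `P`. -/
def Prec (P : List V) (x y : V) : Prop :=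
  ∃ i j : ℕ, i < j ∧ P[i]? = some x ∧ P[j]? = some y

/-- `P` is a directed walk in `G` from `s` to `t`. -/
def IsWalkFrom (G : SimpleGraph V) (P : List V) (s t : V) : Prop :=
  P.Chain' G.Adj ∧ P.head? = some s ∧ P.getLast? = some t

/-- Length of a walk with respect to edge lengths `ℓ`. -/
noncomputable def wlen (ℓ : V → V → ℝ) (P : List V) : ℝ :=
  ((arcs P).map fun p => ℓ p.1 p.2).sum

/-- `P` is a shortest walk in `G` from `s` to `t`. -/
def IsShortest (G : SimpleGraph V) (ℓ : V → V → ℝ) (P : List V) (s t : V) : Prop :=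
  IsWalkFrom G P s t ∧ ∀ Q, IsWalkFrom G Q s t → wlen ℓ P ≤ wlen ℓ Q

/-- Edge lengths are positive (on edges) and symmetric. -/
def PosLengths (G : SimpleGraph V) (ℓ : V → V → ℝ) : Prop :=
  (∀ u v, G.Adj u v → 0 < ℓ u v) ∧ ∀ u v, ℓ u v = ℓ v u


lemma arcs_cons_cons (a b : V) (l : List V) : arcs (a :: b :: l) = (a, b) :: arcs (b :: l) := rfl

lemma arcs_append (X : List V) (x : V) (Y : List V) :
    arcs (X ++ x :: Y) = arcs (X ++ [x]) ++ arcs (x :: Y) := by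
  induction X with
  | nil => simp [arcs]
  | cons a X ih =>
    cases X with
    | nil => rfl
    | cons b X' =>
      simp only [List.cons_append] at ih ⊢
      rw [arcs_cons_cons, arcs_cons_cons, ih]
      rfl

lemma wlen_append (ℓ : V → V → ℝ) (X : List V) (x : V) (Y : List V) :
    wlen ℓ (X ++ x :: Y) = wlen ℓ (X ++ [x]) + wlen ℓ (x :: Y) := by
  unfold wlen
  rw [arcs_append, List.map_append, List.sum_append]

lemma chain'_arcs {R : V → V → Prop} : ∀ {P : List V}, P.Chain' R → ∀ {u v : V},
    (u, v) ∈ arcs P → R u v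
  | [], _, _, _, h => by simp [arcs] at h
  | [a], _, _, _, h => by simp [arcs] at h
  | a :: b :: l, hc, u, v, h => by
    rw [arcs_cons_cons] at h
    rw [List.Chain', List.isChain_cons_cons] at hc
    rcases List.mem_cons.1 h with h | h
    · cases h; exact hc.1
    · exact chain'_arcs hc.2 h

lemma exists_dup {P : List V} (h : ¬ P.Nodup) :
    ∃ (x : V) (A B C : List V), P = A ++ x :: B ++ x :: C := by
  induction P with
  | nil => simp at h
  | cons a l ih =>
    rw [List.nodup_cons] at h
    by_cases ha : a ∈ l
    · obtain ⟨B, C, rfl⟩ := List.append_of_mem ha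
      exact ⟨a, [], B, C, rfl⟩
    · have hl : ¬ l.Nodup := fun hn => h ⟨ha, hn⟩
      obtain ⟨x, A, B, C, rfl⟩ := ih hl
      exact ⟨x, a :: A, B, C, rfl⟩

lemma usesArc_index : ∀ {P : List V} {u v : V}, UsesArc P u v →
    ∃ i : ℕ, P[i]? = some u ∧ P[i+1]? = some v
  | [], u, v, h => by simp [UsesArc, arcs] at h
  | [a], u, v, h => by simp [UsesArc, arcs] at h
  | a :: b :: l, u, v, h => by
    rw [UsesArc, arcs_cons_cons] at h
    rcases List.mem_cons.1 h with h | h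
    · obtain ⟨rfl, rfl⟩ := Prod.mk.injEq .. ▸ h
      exact ⟨0, by simp⟩
    · obtain ⟨i, h1, h2⟩ := usesArc_index (P := b :: l) h
      exact ⟨i + 1, by simpa using h1, by simpa using h2⟩

lemma nodup_no_conflict {P : List V} (h : P.Nodup) : ¬ Conflict P P := by
  rintro ⟨u, v, h1, h2⟩
  obtain ⟨i, hiu, hiv⟩ := usesArc_index h1
  obtain ⟨j, hjv, hju⟩ := usesArc_index h2
  have hi : i < P.length := by
    by_contra hlt
    rw [List.getElem?_eq_none (by omega)] at hiu; exact absurd hiu (by simp)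
  have hi1 : i + 1 < P.length := by
    by_contra hlt
    rw [List.getElem?_eq_none (by omega)] at hiv; exact absurd hiv (by simp)
  have e1 : i = j + 1 := (List.getElem?_inj hi h).1 (hiu.trans hju.symm)
  have e2 : i + 1 = j := (List.getElem?_inj hi1 h).1 (hiv.trans hjv.symm)
  omega

lemma arcs_ne_nil (a b : V) (l : List V) : arcs (a :: b :: l) ≠ [] := by
  rw [arcs_cons_cons]; exact List.cons_ne_nil _ _

lemma reduce (G : SimpleGraph V) (ℓ : V → V → ℝ) (hℓ : PosLengths G ℓ) :
    ∀ (n : ℕ) (P : List V), P.length ≤ n → P.Chain' G.Adj → ¬ P.Nodup →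
    ∃ Q : List V, Q.Chain' G.Adj ∧ Q.head? = P.head? ∧ Q.getLast? = P.getLast? ∧
      wlen ℓ Q < wlen ℓ P ∧ (∀ p ∈ arcs Q, p ∈ arcs P) ∧ Q.Nodup := by
  intro n
  induction n with
  | zero =>
    intro P hlen hc hnd
    rw [Nat.le_zero, List.length_eq_zero_iff] at hlen
    exact absurd (hlen ▸ List.nodup_nil) hnd
  | succ n ih =>
    intro P hlen hc hnd
    obtain ⟨x, A, B, C, rfl⟩ := exists_dup hnd
    -- arcs decompositions
    have harcs1 : arcs (A ++ x :: B ++ x :: C)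
        = arcs (A ++ [x]) ++ (arcs ((x :: B) ++ [x]) ++ arcs (x :: C)) := by
      rw [show A ++ x :: B ++ x :: C = A ++ x :: (B ++ x :: C) by simp,
        arcs_append A x (B ++ x :: C),
        show x :: (B ++ x :: C) = (x :: B) ++ x :: C from rfl,
        arcs_append (x :: B) x C]
    have harcs2 : arcs (A ++ x :: C) = arcs (A ++ [x]) ++ arcs (x :: C) :=
      arcs_append A x C
    have hsub : ∀ p ∈ arcs (A ++ x :: C), p ∈ arcs (A ++ x :: B ++ x :: C) := by
      intro p hp
      rw [harcs2, List.mem_append] at hp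
      rw [harcs1]
      rcases hp with hp | hp
      · exact List.mem_append.2 (Or.inl hp)
      · exact List.mem_append.2 (Or.inr (List.mem_append.2 (Or.inr hp)))
    -- positivity of the removed cycle
    have hmid_pos : 0 < wlen ℓ ((x :: B) ++ [x]) := by
      apply List.sum_pos
      · intro r hr
        rw [List.mem_map] at hr
        obtain ⟨⟨u, v⟩, hp, rfl⟩ := hr
        have hmem : (u, v) ∈ arcs (A ++ x :: B ++ x :: C) := by
          rw [harcs1]
          exact List.mem_append.2 (Or.inr (List.mem_append.2 (Or.inl hp)))
        exact hℓ.1 u v (chain'_arcs hc hmem)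
      · simp only [ne_eq, List.map_eq_nil_iff]
        cases B with
        | nil => exact arcs_ne_nil x x []
        | cons b B' => exact arcs_ne_nil x b (B' ++ [x])
    -- length comparison
    have hwlen : wlen ℓ (A ++ x :: C) < wlen ℓ (A ++ x :: B ++ x :: C) := by
      have e1 : wlen ℓ (A ++ x :: B ++ x :: C)
          = wlen ℓ (A ++ [x]) + (wlen ℓ ((x :: B) ++ [x]) + wlen ℓ (x :: C)) := by
        rw [show A ++ x :: B ++ x :: C = A ++ x :: (B ++ x :: C) by simp,
          wlen_append ℓ A x (B ++ x :: C),
          show x :: (B ++ x :: C) = (x :: B) ++ x :: C from rfl,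
          wlen_append ℓ (x :: B) x C]
      rw [e1, wlen_append ℓ A x C]
      linarith
    -- head? and getLast?
    have hhead : (A ++ x :: C).head? = (A ++ x :: B ++ x :: C).head? := by
      rw [show A ++ x :: B ++ x :: C = A ++ x :: (B ++ x :: C) by simp]
      rw [List.head?_append, List.head?_append]
      rfl
    have hlast : (A ++ x :: C).getLast? = (A ++ x :: B ++ x :: C).getLast? := by
      rw [show A ++ x :: B ++ x :: C = A ++ ((x :: B) ++ x :: C) by simp]
      rw [List.getLast?_append, List.getLast?_append, List.getLast?_append]
      obtain ⟨y, hy⟩ : ∃ y, (x :: C).getLast? = some y :=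
        ⟨(x :: C).getLast (List.cons_ne_nil _ _), List.getLast?_eq_getLast _⟩
      rw [hy]
      rfl
    -- chain'
    have hchain : (A ++ x :: C).Chain' G.Adj := by
      rw [show A ++ x :: B ++ x :: C = A ++ x :: (B ++ x :: C) by simp,
        List.Chain', List.isChain_append] at hc
      obtain ⟨hA, hrest, hlink⟩ := hc
      rw [show x :: (B ++ x :: C) = (x :: B) ++ x :: C from rfl,
        List.isChain_append] at hrest
      rw [List.Chain', List.isChain_append]
      refine ⟨hA, hrest.2.1, ?_⟩
      intro a ha y hy
      exact hlink a ha y (by simpa using hy)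
    -- length bound for recursion
    have hlen' : (A ++ x :: C).length ≤ n := by
      simp only [List.length_append, List.length_cons] at hlen ⊢
      omega
    by_cases hnd' : (A ++ x :: C).Nodup
    · exact ⟨A ++ x :: C, hchain, hhead, hlast, hwlen, hsub, hnd'⟩
    · obtain ⟨Q, hQc, hQh, hQl, hQw, hQs, hQn⟩ := ih (A ++ x :: C) hlen' hchain hnd'
      exact ⟨Q, hQc, hQh.trans hhead, hQl.trans hlast, hQw.trans hwlen,
        fun p hp => hsub p (hQs p hp), hQn⟩

/-- A directed walk from s to t that conflicts with itself can be replaced by a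
strictly shorter simple directed path from s to t using only arcs of the original walk and
not conflicting with itself. -/
theorem stmt_2 (G : SimpleGraph V) (ℓ : V → V → ℝ) (hℓ : PosLengths G ℓ)
    (P : List V) (s t : V)
    (hP : IsWalkFrom G P s t) (hconf : Conflict P P) :
    ∃ P' : List V, IsWalkFrom G P' s t ∧ wlen ℓ P' < wlen ℓ P ∧
      (∀ u v, UsesArc P' u v → UsesArc P u v) ∧ P'.Nodup ∧ ¬ Conflict P' P' := by
  have hnd : ¬ P.Nodup := fun h => nodup_no_conflict h hconf
  obtain ⟨Q, hQc, hQh, hQl, hQw, hQs, hQn⟩ :=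
    reduce G ℓ hℓ P.length P le_rfl hP.1 hnd
  exact ⟨Q, ⟨hQc, hQh.trans hP.2.1, hQl.trans hP.2.2⟩, hQw,
    fun u v h => hQs (u, v) h, hQn, nodup_no_conflict hQn⟩
end

section
/- Let G be a connected undirected graph and (s_1,t_1),...,(s_k,t_k) pairs of vertices. There exists an orientation of G in which s_i can reach t_i for every i if and only if there is an assignment of directions to the bridges of G such that for each i, every bridge on the (unique) sequence of bridges separating s_i from t_i is directed consistently from the s_i-side to the t_i-side; equivalently, no bridge e is required to be crossed in both directions by the demands (i.e., there do not exist indices i, j such that s_i and t_j lie in one component of G − e while t_i and s_j lie in the other). -/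
variable {V : Type*}

/-- `D` is an orientation of the undirected graph `G`: each edge gets exactly one
direction. -/
def IsOrientation (G : SimpleGraph V) (D : V → V → Prop) : Prop :=
  (∀ u v, D u v → G.Adj u v) ∧ ∀ u v, G.Adj u v → (D u v ↔ ¬ D v u)

open Relation SimpleGraph

lemma walk_dichotomy (G : SimpleGraph V) (u v : V) {a b : V} (p : G.Walk a b) :
    (G.deleteEdges {s(u,v)}).Reachable a b ∨
      ((G.deleteEdges {s(u,v)}).Reachable a u ∨ (G.deleteEdges {s(u,v)}).Reachable a v) := by
  induction p with
  | nil => exact Or.inl Reachable.rfl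
  | @cons a c b h p ih =>
    by_cases he : s(a, c) = s(u, v)
    · rw [Sym2.eq_iff] at he
      rcases he with ⟨rfl, rfl⟩ | ⟨rfl, rfl⟩
      · exact Or.inr (Or.inl Reachable.rfl)
      · exact Or.inr (Or.inr Reachable.rfl)
    · have hadj : (G.deleteEdges {s(u,v)}).Adj a c := by
        rw [deleteEdges_adj]; exact ⟨h, by simpa using he⟩
      rcases ih with h1 | h1 | h1
      · exact Or.inl (hadj.reachable.trans h1)
      · exact Or.inr (Or.inl (hadj.reachable.trans h1))
      · exact Or.inr (Or.inr (hadj.reachable.trans h1))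

lemma side_dichotomy (G : SimpleGraph V) (hconn : G.Connected) (u v w : V) :
    (G.deleteEdges {s(u,v)}).Reachable w u ∨ (G.deleteEdges {s(u,v)}).Reachable w v := by
  obtain ⟨p⟩ := hconn.preconnected w u
  rcases walk_dichotomy G u v p with h | h | h
  · exact Or.inl h
  · exact Or.inl h
  · exact Or.inr h

lemma isBridge_iff' (G : SimpleGraph V) (hconn : G.Connected) {u v : V} :
    G.IsBridge s(u, v) ↔ G.Adj u v ∧ ¬(G.deleteEdges {s(u, v)}).Reachable u v :=
  ⟨fun hb => ⟨hb.reachable_iff_adj.mp (hconn.preconnected u v), isBridge_iff.mp hb⟩,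
    fun h => isBridge_iff.mpr h.2⟩

lemma cross_of_rtg (G : SimpleGraph V) (hconn : G.Connected) {D : V → V → Prop}
    (ho : IsOrientation G D) {u v a : V} (hb : G.IsBridge s(u,v))
    (ha : (G.deleteEdges {s(u,v)}).Reachable a u) {b : V}
    (hab : Relation.ReflTransGen D a b) :
    (G.deleteEdges {s(u,v)}).Reachable b v → D u v := by
  have hnr : ¬ (G.deleteEdges {s(u,v)}).Reachable u v := (isBridge_iff' G hconn |>.mp hb).2
  induction hab with
  | refl => exact fun hv => absurd (ha.symm.trans hv) hnr
  | @tail c b' hac hcb ih =>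
    intro hbv
    rcases side_dichotomy G hconn u v c with hcu | hcv
    · have hadj : G.Adj c b' := ho.1 _ _ hcb
      by_cases he : s(c, b') = s(u, v)
      · rw [Sym2.eq_iff] at he
        rcases he with ⟨rfl, rfl⟩ | ⟨rfl, rfl⟩
        · exact hcb
        · exact absurd hcu.symm hnr
      · have hadj' : (G.deleteEdges {s(u,v)}).Adj c b' := by
          rw [deleteEdges_adj]; exact ⟨hadj, by simpa using he⟩
        exact absurd (hcu.symm.trans (hadj'.reachable.trans hbv)) hnr
    · exact ih hcv

variable (G : SimpleGraph V) (F : V → V → Prop)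

def Pre (u v : V) : Prop :=
  ∀ x y : V, G.IsBridge s(x,y) → (G.deleteEdges {s(x,y)}).Reachable u x →
    (G.deleteEdges {s(x,y)}).Reachable v y → F x y

def Wset (r : V) (P : Set (V × V)) : Set V :=
  insert r {x | ∃ y : V, (x,y) ∈ P ∨ (y,x) ∈ P}

def Good (r : V) : Set (Set (V × V)) :=
  { P | (∀ p ∈ P, G.Adj p.1 p.2) ∧
        (∀ p ∈ P, (p.2, p.1) ∉ P) ∧
        (∀ p ∈ P, G.IsBridge s(p.1, p.2) → F p.1 p.2) ∧
        (∀ u ∈ Wset r P, Relation.ReflTransGen (fun a b => (a,b) ∈ P ∨ (b,a) ∈ P) r u) ∧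
        (∀ u ∈ Wset r P, ∀ v ∈ Wset r P, Pre G F u v →
          Relation.ReflTransGen (fun a b => (a,b) ∈ P) u v) }

variable {G F}

lemma mem_wset_left {r : V} {P : Set (V × V)} {p : V × V} (hp : p ∈ P) : p.1 ∈ Wset r P :=
  Or.inr ⟨p.2, Or.inl (by simpa using hp)⟩

lemma mem_wset_right {r : V} {P : Set (V × V)} {p : V × V} (hp : p ∈ P) : p.2 ∈ Wset r P :=
  Or.inr ⟨p.1, Or.inr (by simpa using hp)⟩

lemma rtg_reachable {H : SimpleGraph V} {R : V → V → Prop}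
    (h : ∀ a b, R a b → H.Reachable a b) {x y : V} (hr : Relation.ReflTransGen R x y) :
    H.Reachable x y := by
  induction hr with
  | refl => exact Reachable.rfl
  | tail _ hstep ih => exact ih.trans (h _ _ hstep)

lemma wset_reach {r : V} {P : Set (V × V)} (hP : P ∈ Good G F r) {e : Sym2 V}
    (he : ∀ p ∈ P, s(p.1, p.2) ≠ e) {u v : V}
    (hu : u ∈ Wset r P) (hv : v ∈ Wset r P) : (G.deleteEdges {e}).Reachable u v := by
  have step : ∀ a b : V, ((a,b) ∈ P ∨ (b,a) ∈ P) → (G.deleteEdges {e}).Reachable a b := by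
    rintro a b (h | h)
    · refine Adj.reachable ?_
      rw [deleteEdges_adj]
      exact ⟨hP.1 _ h, by simpa using he _ h⟩
    · refine (Adj.reachable ?_).symm
      rw [deleteEdges_adj]
      refine ⟨hP.1 _ h, ?_⟩
      simp only [Set.mem_singleton_iff]
      exact he (b,a) h
  exact (rtg_reachable step (hP.2.2.2.1 u hu)).symm.trans (rtg_reachable step (hP.2.2.2.1 v hv))

lemma pre_trans_right {u n x : V}
    (h : ∀ e : Sym2 V, G.IsBridge e → (G.deleteEdges {e}).Reachable n x)
    (hp : Pre G F u n) : Pre G F u x :=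
  fun a b hb hua hxb => hp a b hb hua ((h _ hb).trans hxb)

lemma pre_trans_left {n v x : V}
    (h : ∀ e : Sym2 V, G.IsBridge e → (G.deleteEdges {e}).Reachable x n)
    (hp : Pre G F n v) : Pre G F x v :=
  fun a b hb hxa hvb => hp a b hb ((h _ hb).symm.trans hxa) hvb

lemma take_to_W {G' : SimpleGraph V} (W : Set V) {y x : V} (w : G'.Walk y x) :
    w.IsPath → x ∈ W →
    ∃ (z : V) (q : G'.Walk y z), q.IsPath ∧ z ∈ W ∧
      (∀ d ∈ q.darts, d.fst ∉ W) ∧ (∀ d ∈ q.darts, d ∈ w.darts) ∧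
      q.support ⊆ w.support := by
  classical
  induction w with
  | @nil a =>
    intro _ hx
    exact ⟨a, Walk.nil, by simp [Walk.IsPath.nil], hx, by simp, by simp, by simp⟩
  | @cons a c b h w' ih =>
    intro hp hx
    by_cases hyW : a ∈ W
    · exact ⟨a, Walk.nil, by simp [Walk.IsPath.nil], hyW, by simp, by simp,
        by simp [Walk.support_cons]⟩
    · obtain ⟨z, q', hq, hz, hd1, hd2, hs⟩ := ih hp.of_cons hx
      have hans : a ∉ q'.support := fun hmem =>
        ((Walk.cons_isPath_iff h w').mp hp).2 (hs hmem)
      refine ⟨z, Walk.cons h q', hq.cons hans, hz, ?_, ?_, ?_⟩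
      · intro d hd
        rw [Walk.darts_cons, List.mem_cons] at hd
        rcases hd with rfl | hd
        · exact hyW
        · exact hd1 d hd
      · intro d hd
        rw [Walk.darts_cons, List.mem_cons] at hd
        rw [Walk.darts_cons, List.mem_cons]
        rcases hd with rfl | hd
        · exact Or.inl rfl
        · exact Or.inr (hd2 d hd)
      · rw [Walk.support_cons, Walk.support_cons]
        exact List.cons_subset_cons a hs

lemma walk_rtg {G' : SimpleGraph V} {R : V → V → Prop} {y z : V} (q : G'.Walk y z) :
    (∀ d ∈ q.darts, R d.fst d.snd) → ∀ n ∈ q.support,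
      Relation.ReflTransGen R y n ∧ Relation.ReflTransGen R n z := by
  induction q with
  | nil =>
    intro _ n hn
    rw [Walk.support_nil, List.mem_singleton] at hn
    subst hn
    exact ⟨Relation.ReflTransGen.refl, Relation.ReflTransGen.refl⟩
  | @cons a c b h q' ih =>
    intro hR n hn
    have hstep : R a c := hR ⟨(a, c), h⟩ (by rw [Walk.darts_cons]; exact List.mem_cons_self)
    have hR' : ∀ d ∈ q'.darts, R d.fst d.snd := fun d hd =>
      hR d (by rw [Walk.darts_cons]; exact List.mem_cons_of_mem _ hd)
    rw [Walk.support_cons, List.mem_cons] at hn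
    rcases hn with rfl | hn
    · exact ⟨Relation.ReflTransGen.refl,
        Relation.ReflTransGen.head hstep (ih hR' c q'.start_mem_support).2⟩
    · obtain ⟨h1, h2⟩ := ih hR' n hn
      exact ⟨Relation.ReflTransGen.head hstep h1, h2⟩

lemma wset_mono {r : V} {P Q : Set (V × V)} (h : P ⊆ Q) : Wset r P ⊆ Wset r Q := by
  rintro u (rfl | ⟨w, hw | hw⟩)
  · exact Set.mem_insert _ _
  · exact Set.mem_insert_iff.mpr (Or.inr ⟨w, Or.inl (h hw)⟩)
  · exact Set.mem_insert_iff.mpr (Or.inr ⟨w, Or.inr (h hw)⟩)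

lemma wset_insert {r a b : V} {M : Set (V × V)} :
    Wset r (insert (a,b) M) ⊆ insert a (insert b (Wset r M)) := by
  rintro u (rfl | ⟨w, hw | hw⟩)
  · exact Or.inr (Or.inr (Set.mem_insert _ _))
  · rcases Set.mem_insert_iff.mp hw with heq | hM'
    · exact Or.inl (congrArg Prod.fst heq)
    · exact Or.inr (Or.inr (mem_wset_left hM'))
  · rcases Set.mem_insert_iff.mp hw with heq | hM'
    · exact Or.inr (Or.inl (congrArg Prod.snd heq))
    · exact Or.inr (Or.inr (mem_wset_right hM'))

lemma extend_bridge {r : V} (HF1 : ∀ x y : V, G.IsBridge s(x,y) → (F x y ↔ ¬ F y x))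
    {M : Set (V × V)} (hM : M ∈ Good G F r) {x y : V} (hxy : G.Adj x y)
    (hx : x ∈ Wset r M) (h1 : (x,y) ∉ M) (h2 : (y,x) ∉ M)
    (hbr : G.IsBridge s(x,y)) :
    ∃ M' ∈ Good G F r, M ⊂ M' := by
  classical
  obtain ⟨hM1, hM2, hM3, hM4, hM5⟩ := hM
  have hMG : M ∈ Good G F r := ⟨hM1, hM2, hM3, hM4, hM5⟩
  have hne : x ≠ y := hxy.ne
  have hswap : s(y,x) = s(x,y) := Sym2.eq_swap
  have hMe : ∀ p ∈ M, s(p.1, p.2) ≠ s(x,y) := by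
    intro p hp he
    rw [Sym2.eq_iff] at he
    rcases he with ⟨ha, hb⟩ | ⟨ha, hb⟩
    · exact h1 (by rw [← ha, ← hb]; simpa using hp)
    · exact h2 (by rw [← hb, ← ha]; simpa using hp)
  have hWx : ∀ w' ∈ Wset r M, (G.deleteEdges {s(x,y)}).Reachable w' x :=
    fun w' hw' => wset_reach hMG hMe hw' hx
  have hnxy : ¬ (G.deleteEdges {s(x,y)}).Reachable x y := isBridge_iff.mp hbr
  have hftot : F x y ∨ F y x := by
    have := HF1 x y hbr; tauto
  rcases hftot with hF | hF
  · -- insert (x, y)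
    have hsub2 : ∀ a b : V, (a,b) ∈ M → (a,b) ∈ insert (x,y) M :=
      fun a b h => Set.mem_insert_of_mem _ h
    refine ⟨insert (x,y) M, ⟨?_, ?_, ?_, ?_, ?_⟩, Set.ssubset_insert h1⟩
    · rintro p hp
      rcases Set.mem_insert_iff.mp hp with rfl | hp
      · exact hxy
      · exact hM1 p hp
    · rintro ⟨p1, p2⟩ hp hrev
      rcases Set.mem_insert_iff.mp hp with heq | hpM
      · rcases Set.mem_insert_iff.mp hrev with heq2 | hrevM
        · simp only [Prod.mk.injEq] at heq heq2
          exact hne (heq.1.symm.trans heq2.2)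
        · simp only [Prod.mk.injEq] at heq
          apply h2
          rw [← heq.2, ← heq.1]
          exact hrevM
      · rcases Set.mem_insert_iff.mp hrev with heq2 | hrevM
        · simp only [Prod.mk.injEq] at heq2
          apply h2
          rw [← heq2.2, ← heq2.1]
          exact hpM
        · exact hM2 _ hpM hrevM
    · rintro ⟨p1, p2⟩ hp hb
      rcases Set.mem_insert_iff.mp hp with heq | hpM
      · simp only [Prod.mk.injEq] at heq
        rw [heq.1, heq.2] at hb ⊢
        exact hF
      · exact hM3 _ hpM hb
    · intro u hu
      have hstepsub : ∀ a b : V, ((a,b) ∈ M ∨ (b,a) ∈ M) →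
          ((a,b) ∈ insert (x,y) M ∨ (b,a) ∈ insert (x,y) M) :=
        fun a b h => h.imp (Set.mem_insert_of_mem _) (Set.mem_insert_of_mem _)
      rcases Set.mem_insert_iff.mp (wset_insert hu) with rfl | hu2
      · exact (hM4 u hx).lift id hstepsub
      · rcases Set.mem_insert_iff.mp hu2 with rfl | hu3
        · exact ((hM4 x hx).lift id hstepsub).tail (Or.inl (Set.mem_insert _ _))
        · exact (hM4 u hu3).lift id hstepsub
    · have memcase : ∀ u', u' ∈ Wset r (insert (x,y) M) → u' = y ∨ u' ∈ Wset r M := by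
        intro u' hu'
        rcases Set.mem_insert_iff.mp (wset_insert hu') with rfl | h
        · exact Or.inr hx
        · rcases Set.mem_insert_iff.mp h with rfl | h
          · exact Or.inl rfl
          · exact Or.inr h
      have hUX : ∀ u, (G.deleteEdges {s(x,y)}).Reachable u x → Pre G F u y → Pre G F u x := by
        intro u hux hpre a b hbab hua hxb
        by_cases he : s(a,b) = s(x,y)
        · rw [Sym2.eq_iff] at he
          rcases he with ⟨rfl, rfl⟩ | ⟨rfl, rfl⟩
          · exact absurd hxb hnxy
          · rw [hswap] at hua
            exact absurd (hux.symm.trans hua) hnxy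
        · have hyb : (G.deleteEdges {s(a,b)}).Reachable y b := by
            refine (Adj.reachable ?_).trans hxb
            rw [deleteEdges_adj]
            refine ⟨hxy.symm, ?_⟩
            simp only [Set.mem_singleton_iff]
            exact fun hh => he (hh.symm.trans hswap)
          exact hpre a b hbab hua hyb
      have hYV : ∀ v ∈ Wset r M, ¬ Pre G F y v := by
        intro v hv hpre
        have hvx : (G.deleteEdges {s(y,x)}).Reachable v x := by rw [hswap]; exact hWx v hv
        have hbr' : G.IsBridge s(y,x) := by rw [hswap]; exact hbr
        exact ((HF1 x y hbr).mp hF) (hpre y x hbr' Reachable.rfl hvx)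
      intro u hu v hv hpre
      rcases memcase u hu with rfl | huW
      · rcases memcase v hv with rfl | hvW
        · exact Relation.ReflTransGen.refl
        · exact absurd hpre (hYV v hvW)
      · rcases memcase v hv with rfl | hvW
        · have hpx : Pre G F u x := hUX u (hWx u huW) hpre
          exact ((hM5 u huW x hx hpx).lift id hsub2).tail (Set.mem_insert _ _)
        · exact (hM5 u huW v hvW hpre).lift id hsub2
  · -- insert (y, x)
    have hsub2 : ∀ a b : V, (a,b) ∈ M → (a,b) ∈ insert (y,x) M :=
      fun a b h => Set.mem_insert_of_mem _ h
    refine ⟨insert (y,x) M, ⟨?_, ?_, ?_, ?_, ?_⟩, Set.ssubset_insert h2⟩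
    · rintro p hp
      rcases Set.mem_insert_iff.mp hp with rfl | hp
      · exact hxy.symm
      · exact hM1 p hp
    · rintro ⟨p1, p2⟩ hp hrev
      rcases Set.mem_insert_iff.mp hp with heq | hpM
      · rcases Set.mem_insert_iff.mp hrev with heq2 | hrevM
        · simp only [Prod.mk.injEq] at heq heq2
          exact hne (heq2.1.symm.trans heq.2).symm
        · simp only [Prod.mk.injEq] at heq
          apply h1
          rw [← heq.2, ← heq.1]
          exact hrevM
      · rcases Set.mem_insert_iff.mp hrev with heq2 | hrevM
        · simp only [Prod.mk.injEq] at heq2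
          apply h1
          rw [← heq2.2, ← heq2.1]
          exact hpM
        · exact hM2 _ hpM hrevM
    · rintro ⟨p1, p2⟩ hp hb
      rcases Set.mem_insert_iff.mp hp with heq | hpM
      · simp only [Prod.mk.injEq] at heq
        rw [heq.1, heq.2] at hb ⊢
        exact hF
      · exact hM3 _ hpM hb
    · intro u hu
      have hstepsub : ∀ a b : V, ((a,b) ∈ M ∨ (b,a) ∈ M) →
          ((a,b) ∈ insert (y,x) M ∨ (b,a) ∈ insert (y,x) M) :=
        fun a b h => h.imp (Set.mem_insert_of_mem _) (Set.mem_insert_of_mem _)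
      rcases Set.mem_insert_iff.mp (wset_insert hu) with rfl | hu2
      · exact ((hM4 x hx).lift id hstepsub).tail (Or.inr (Set.mem_insert _ _))
      · rcases Set.mem_insert_iff.mp hu2 with rfl | hu3
        · exact (hM4 u hx).lift id hstepsub
        · exact (hM4 u hu3).lift id hstepsub
    · have memcase : ∀ u', u' ∈ Wset r (insert (y,x) M) → u' = y ∨ u' ∈ Wset r M := by
        intro u' hu'
        rcases Set.mem_insert_iff.mp (wset_insert hu') with rfl | h
        · exact Or.inl rfl
        · rcases Set.mem_insert_iff.mp h with rfl | h
          · exact Or.inr hx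
          · exact Or.inr h
      have hXV : ∀ v, (G.deleteEdges {s(x,y)}).Reachable v x → Pre G F y v → Pre G F x v := by
        intro v hvx hpre a b hbab hxa hvb
        by_cases he : s(a,b) = s(x,y)
        · rw [Sym2.eq_iff] at he
          rcases he with ⟨rfl, rfl⟩ | ⟨rfl, rfl⟩
          · exact absurd (hvx.symm.trans hvb) hnxy
          · rw [hswap] at hxa
            exact absurd hxa hnxy
        · have hya : (G.deleteEdges {s(a,b)}).Reachable y a := by
            refine (Adj.reachable ?_).trans hxa
            rw [deleteEdges_adj]
            refine ⟨hxy.symm, ?_⟩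
            simp only [Set.mem_singleton_iff]
            exact fun hh => he (hh.symm.trans hswap)
          exact hpre a b hbab hya hvb
      have hUY : ∀ u ∈ Wset r M, ¬ Pre G F u y := by
        intro u hu hpre
        exact ((HF1 x y hbr).mp (hpre x y hbr (hWx u hu) Reachable.rfl)) hF
      intro u hu v hv hpre
      rcases memcase u hu with rfl | huW
      · rcases memcase v hv with rfl | hvW
        · exact Relation.ReflTransGen.refl
        · have hpx : Pre G F x v := hXV v (hWx v hvW) hpre
          exact Relation.ReflTransGen.head (Set.mem_insert _ _)
            ((hM5 x hx v hvW hpx).lift id hsub2)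
      · rcases memcase v hv with rfl | hvW
        · exact absurd hpre (hUY u huW)
        · exact (hM5 u huW v hvW hpre).lift id hsub2

lemma extend_nonbridge {r : V}
    {M : Set (V × V)} (hM : M ∈ Good G F r) {x y : V} (hxy : G.Adj x y)
    (hx : x ∈ Wset r M) (h1 : (x,y) ∉ M) (h2 : (y,x) ∉ M)
    (hbr : ¬ G.IsBridge s(x,y)) :
    ∃ M' ∈ Good G F r, M ⊂ M' := by
  classical
  obtain ⟨hM1, hM2, hM3, hM4, hM5⟩ := hM
  have hreach : (G.deleteEdges {s(x,y)}).Reachable y x := by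
    rw [isBridge_iff] at hbr
    push_neg at hbr
    exact hbr.symm
  obtain ⟨w0⟩ := hreach
  set p : (G.deleteEdges {s(x,y)}).Walk y x := w0.bypass with hpdef
  have hp : p.IsPath := w0.bypass_isPath
  obtain ⟨z, q, hqpath, hzW, hqW, hqd, hqs⟩ := take_to_W (Wset r M) p hp hx
  -- lift p to G and build the cycle through s(x,y)
  have hedge : ∀ e ∈ p.edges, e ∈ G.edgeSet :=
    fun e he => edgeSet_mono (G.deleteEdges_le _) (p.edges_subset_edgeSet he)
  set pG : G.Walk y x := p.transfer G hedge with hpGdef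
  have hpGpath : pG.IsPath := hp.transfer hedge
  have hxyE : s(x,y) ∉ pG.edges := by
    rw [hpGdef, Walk.edges_transfer]
    intro hmem
    have hmem2 := p.edges_subset_edgeSet hmem
    rw [mem_edgeSet, deleteEdges_adj] at hmem2
    exact hmem2.2 rfl
  set c : G.Walk x x := Walk.cons hxy pG with hcdef
  have hcyc : c.IsCycle := (Walk.cons_isCycle_iff pG hxy).mpr ⟨hpGpath, hxyE⟩
  have hbnc : ∀ e : Sym2 V, G.IsBridge e → e ∉ c.edges := fun e hb =>
    hb.notMem_edges_of_isCycle hcyc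
  have hSC : ∀ e : Sym2 V, G.IsBridge e → ∀ a ∈ c.support, ∀ b ∈ c.support,
      (G.deleteEdges {e}).Reachable a b := by
    intro e hb a ha b hb'
    have hc' : ∀ e' ∈ c.edges, e' ∈ (G.deleteEdges {e}).edgeSet := by
      intro e' he'
      rw [edgeSet_deleteEdges]
      exact ⟨c.edges_subset_edgeSet he', by
        simp only [Set.mem_singleton_iff]
        exact fun hh => hbnc e hb (hh ▸ he')⟩
    set c2 := c.transfer (G.deleteEdges {e}) hc' with hc2def
    have hsupp : c2.support = c.support := Walk.support_transfer _ _
    have hax : ∀ a' ∈ c.support, (G.deleteEdges {e}).Reachable x a' := by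
      intro a' ha'
      exact ⟨c2.takeUntil a' (by rw [hsupp]; exact ha')⟩
    exact (hax a ha).symm.trans (hax b hb')
  have hqcs : ∀ n ∈ q.support, n ∈ c.support := by
    intro n hn
    have hnp : n ∈ p.support := hqs hn
    rw [hcdef, Walk.support_cons]
    refine List.mem_cons_of_mem _ ?_
    rw [hpGdef, Walk.support_transfer]
    exact hnp
  have hxc : x ∈ c.support := c.start_mem_support
  have hyq : y ∈ q.support := q.start_mem_support
  have hzq : z ∈ q.support := q.end_mem_support
  -- the new pairs
  set NP : Set (V × V) := insert (x,y) {pr | ∃ d ∈ q.darts, d.toProd = pr} with hNP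
  set M' : Set (V × V) := M ∪ NP with hM'def
  have hxyNP : (x, y) ∈ NP := Set.mem_insert _ _
  have hdNP : ∀ d ∈ q.darts, d.toProd ∈ NP := fun d hd =>
    Set.mem_insert_of_mem _ ⟨d, hd, rfl⟩
  have hNPadj : ∀ pr ∈ NP, G.Adj pr.1 pr.2 := by
    rintro pr hpr
    rcases Set.mem_insert_iff.mp hpr with rfl | ⟨d, hd, rfl⟩
    · exact hxy
    · exact (deleteEdges_adj.mp d.adj).1
  have hNPedge : ∀ pr ∈ NP, s(pr.1, pr.2) ∈ c.edges := by
    rintro pr hpr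
    rcases Set.mem_insert_iff.mp hpr with rfl | ⟨d, hd, rfl⟩
    · rw [hcdef, Walk.edges_cons]
      exact List.mem_cons_self
    · have hdp : d ∈ p.darts := hqd d hd
      have hde : d.edge ∈ p.edges := List.mem_map_of_mem hdp
      rw [hcdef, Walk.edges_cons]
      refine List.mem_cons_of_mem _ ?_
      rw [hpGdef, Walk.edges_transfer]
      exact hde
  have hNPnotbr : ∀ pr ∈ NP, ¬ G.IsBridge s(pr.1, pr.2) := fun pr hpr hb =>
    hbnc _ hb (hNPedge pr hpr)
  have hNPold : ∀ pr ∈ NP, pr ∉ M ∧ (pr.2, pr.1) ∉ M := by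
    rintro pr hpr
    rcases Set.mem_insert_iff.mp hpr with rfl | ⟨d, hd, rfl⟩
    · exact ⟨h1, h2⟩
    · have hfW : d.fst ∉ Wset r M := hqW d hd
      exact ⟨fun hmem => hfW (mem_wset_left hmem), fun hmem => hfW (mem_wset_right hmem)⟩
  have hdartne : ∀ d : (G.deleteEdges {s(x,y)}).Dart, d.toProd ≠ (x,y) ∧ d.toProd ≠ (y,x) := by
    intro d
    have hadj := d.adj
    constructor <;> intro hEq
    · rw [deleteEdges_adj] at hadj
      apply hadj.2
      have h1' : d.fst = x := congrArg Prod.fst hEq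
      have h2' : d.snd = y := congrArg Prod.snd hEq
      rw [h1', h2']
      rfl
    · rw [deleteEdges_adj] at hadj
      apply hadj.2
      have h1' : d.fst = y := congrArg Prod.fst hEq
      have h2' : d.snd = x := congrArg Prod.snd hEq
      rw [h1', h2']
      exact Sym2.eq_swap
  have hsupnodup : q.support.Nodup := (Walk.isPath_def q).mp hqpath
  have hqedges_nodup : q.edges.Nodup := Walk.edges_nodup_of_support_nodup hsupnodup
  have hrevNP : ∀ pr ∈ NP, (pr.2, pr.1) ∉ NP := by
    rintro pr hpr hrev
    rcases Set.mem_insert_iff.mp hpr with rfl | ⟨d, hd, rfl⟩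
    · rcases Set.mem_insert_iff.mp hrev with heq | ⟨d2, hd2, hdeq2⟩
      · exact hxy.ne (congrArg Prod.fst heq).symm
      · exact (hdartne d2).2 hdeq2
    · rcases Set.mem_insert_iff.mp hrev with heq | ⟨d2, hd2, hdeq2⟩
      · apply (hdartne d).2
        have e1 : d.toProd.2 = x := congrArg Prod.fst heq
        have e2 : d.toProd.1 = y := congrArg Prod.snd heq
        exact Prod.ext e2 e1
      · -- two opposite darts on a path: impossible
        have hEe : d2.edge = d.edge := by
          show s(d2.fst, d2.snd) = s(d.fst, d.snd)
          have e1 : d2.fst = d.snd := congrArg Prod.fst hdeq2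
          have e2 : d2.snd = d.fst := congrArg Prod.snd hdeq2
          rw [e1, e2]
          exact Sym2.eq_swap
        have hne12 : d2 ≠ d := by
          intro hEq
          rw [hEq] at hdeq2
          have : d.fst = d.snd := (congrArg Prod.snd hdeq2).symm.trans rfl ▸ rfl
          exact d.fst_ne_snd ((congrArg Prod.snd hdeq2).symm)
        exact hne12 (List.inj_on_of_nodup_map hqedges_nodup hd2 hd hEe)
  -- reachability along the ear
  have hRTGq : ∀ n ∈ q.support,
      Relation.ReflTransGen (fun a b => (a,b) ∈ M') y n ∧
      Relation.ReflTransGen (fun a b => (a,b) ∈ M') n z := by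
    refine walk_rtg q ?_
    intro d hd
    exact Or.inr (hdNP d hd)
  have hxyM' : (x, y) ∈ M' := Or.inr hxyNP
  have hA : ∀ n ∈ q.support, Relation.ReflTransGen (fun a b => (a,b) ∈ M') x n :=
    fun n hn => Relation.ReflTransGen.head hxyM' (hRTGq n hn).1
  have hB : ∀ n ∈ q.support, Relation.ReflTransGen (fun a b => (a,b) ∈ M') n z :=
    fun n hn => (hRTGq n hn).2
  have hsubM : ∀ a b : V, (a,b) ∈ M → (a,b) ∈ M' := fun a b h => Or.inl h
  -- membership characterization of the new W
  have memcase : ∀ u', u' ∈ Wset r M' → u' ∈ Wset r M ∨ u' ∈ q.support := by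
    rintro u' (rfl | ⟨w', hw | hw⟩)
    · exact Or.inl (Set.mem_insert _ _)
    · rcases hw with hw | hw
      · exact Or.inl (mem_wset_left hw)
      · rcases Set.mem_insert_iff.mp hw with heq | ⟨d, hd, hdeq⟩
        · simp only [Prod.mk.injEq] at heq
          rcases heq with ⟨rfl, rfl⟩
          exact Or.inl hx
        · have huf : d.fst = u' := congrArg Prod.fst hdeq
          rw [← huf]
          exact Or.inr (Walk.dart_fst_mem_support_of_mem_darts q hd)
    · rcases hw with hw | hw
      · exact Or.inl (mem_wset_right hw)
      · rcases Set.mem_insert_iff.mp hw with heq | ⟨d, hd, hdeq⟩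
        · simp only [Prod.mk.injEq] at heq
          rcases heq with ⟨rfl, rfl⟩
          exact Or.inr hyq
        · have hus : d.snd = u' := congrArg Prod.snd hdeq
          rw [← hus]
          exact Or.inr (Walk.dart_snd_mem_support_of_mem_darts q hd)
  refine ⟨M', ⟨?_, ?_, ?_, ?_, ?_⟩, ?_⟩
  · rintro pr (hpr | hpr)
    · exact hM1 pr hpr
    · exact hNPadj pr hpr
  · rintro pr hpr hrev
    rcases hpr with hpr | hpr
    · rcases hrev with hrev | hrev
      · exact hM2 pr hpr hrev
      · exact (hNPold _ hrev).2 (by simpa using hpr)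
    · rcases hrev with hrev | hrev
      · exact (hNPold _ hpr).2 hrev
      · exact hrevNP pr hpr hrev
  · rintro pr (hpr | hpr) hb
    · exact hM3 pr hpr hb
    · exact absurd hb (hNPnotbr pr hpr)
  · intro u hu
    have hstepsub : ∀ a b : V, ((a,b) ∈ M ∨ (b,a) ∈ M) →
        ((a,b) ∈ M' ∨ (b,a) ∈ M') :=
      fun a b h => h.imp Or.inl Or.inl
    rcases memcase u hu with huW | huq
    · exact (hM4 u huW).lift id hstepsub
    · refine Relation.ReflTransGen.trans ((hM4 x hx).lift id hstepsub) ?_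
      exact ((hA u huq).lift (p := fun a b => (a,b) ∈ M' ∨ (b,a) ∈ M') id (fun a b h => Or.inl h))
  · intro u hu v hv hpre
    rcases memcase u hu with huW | huq
    · rcases memcase v hv with hvW | hvq
      · exact (hM5 u huW v hvW hpre).lift id hsubM
      · -- u old, v = n on the ear
        have hpux : Pre G F u x := by
          refine pre_trans_right (fun e hb => ?_) hpre
          exact hSC e hb v (hqcs v hvq) x hxc
        exact Relation.ReflTransGen.trans ((hM5 u huW x hx hpux).lift id hsubM) (hA v hvq)
    · rcases memcase v hv with hvW | hvq
      · -- u on ear, v old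
        have hpzv : Pre G F z v := by
          refine pre_trans_left (fun e hb => ?_) hpre
          exact hSC e hb z (hqcs z hzq) u (hqcs u huq)
        exact Relation.ReflTransGen.trans (hB u huq) ((hM5 z hzW v hvW hpzv).lift id hsubM)
      · -- both on ear
        have hpzx : Pre G F z x := by
          intro a b hbab hza hxb
          have hzx : (G.deleteEdges {s(a,b)}).Reachable z x := hSC _ hbab z (hqcs z hzq) x hxc
          have : (G.deleteEdges {s(a,b)}).Reachable a b := (hza.symm.trans hzx).trans hxb
          exact absurd this (isBridge_iff.mp hbab)
        refine Relation.ReflTransGen.trans (hB u huq) ?_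
        refine Relation.ReflTransGen.trans ((hM5 z hzW x hx hpzx).lift id hsubM) (hA v hvq)
  · constructor
    · exact fun pr hpr => Or.inl hpr
    · intro hsub
      exact h1 (hsub hxyM')

lemma good_empty {r : V} : (∅ : Set (V × V)) ∈ Good G F r := by
  refine ⟨by simp, by simp, by simp, ?_, ?_⟩
  · rintro u (rfl | ⟨w, hw | hw⟩)
    · exact Relation.ReflTransGen.refl
    · exact absurd hw (Set.notMem_empty _)
    · exact absurd hw (Set.notMem_empty _)
  · rintro u (rfl | ⟨w, hw | hw⟩) v hv hpre
    · rcases hv with rfl | ⟨w', hw' | hw'⟩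
      · exact Relation.ReflTransGen.refl
      · exact absurd hw' (Set.notMem_empty _)
      · exact absurd hw' (Set.notMem_empty _)
    · exact absurd hw (Set.notMem_empty _)
    · exact absurd hw (Set.notMem_empty _)

lemma good_chain {r : V} (c : Set (Set (V × V))) (hc : c ⊆ Good G F r)
    (hchain : IsChain (· ⊆ ·) c) (hne : c.Nonempty) : ⋃₀ c ∈ Good G F r := by
  have hdir : ∀ P ∈ c, ∀ Q ∈ c, ∃ T ∈ c, P ⊆ T ∧ Q ⊆ T := by
    intro P hP Q hQ
    rcases eq_or_ne P Q with rfl | hPQ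
    · exact ⟨P, hP, subset_rfl, subset_rfl⟩
    · rcases hchain hP hQ hPQ with h | h
      · exact ⟨Q, hQ, h, subset_rfl⟩
      · exact ⟨P, hP, subset_rfl, h⟩
  refine ⟨?_, ?_, ?_, ?_, ?_⟩
  · rintro p ⟨P, hP, hpP⟩
    exact (hc hP).1 p hpP
  · rintro p ⟨P, hP, hpP⟩ ⟨Q, hQ, hpQ⟩
    obtain ⟨T, hT, hPT, hQT⟩ := hdir P hP Q hQ
    exact (hc hT).2.1 p (hPT hpP) (hQT hpQ)
  · rintro p ⟨P, hP, hpP⟩ hb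
    exact (hc hP).2.2.1 p hpP hb
  · intro u hu
    have : ∃ P ∈ c, u ∈ Wset r P := by
      rcases hu with rfl | ⟨w, ⟨P, hP, hw⟩ | ⟨P, hP, hw⟩⟩
      · obtain ⟨P, hP⟩ := hne
        exact ⟨P, hP, Set.mem_insert _ _⟩
      · exact ⟨P, hP, mem_wset_left hw⟩
      · exact ⟨P, hP, mem_wset_right hw⟩
    obtain ⟨P, hP, huP⟩ := this
    exact ((hc hP).2.2.2.1 u huP).lift id
      (fun a b h => h.imp (fun h' => ⟨P, hP, h'⟩) (fun h' => ⟨P, hP, h'⟩))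
  · intro u hu v hv hpre
    have hex : ∀ w', w' ∈ Wset r (⋃₀ c) → ∃ P ∈ c, w' ∈ Wset r P := by
      rintro w' (rfl | ⟨w, ⟨P, hP, hw⟩ | ⟨P, hP, hw⟩⟩)
      · obtain ⟨P, hP⟩ := hne
        exact ⟨P, hP, Set.mem_insert _ _⟩
      · exact ⟨P, hP, mem_wset_left hw⟩
      · exact ⟨P, hP, mem_wset_right hw⟩
    obtain ⟨P, hP, huP⟩ := hex u hu
    obtain ⟨Q, hQ, hvQ⟩ := hex v hv
    obtain ⟨T, hT, hPT, hQT⟩ := hdir P hP Q hQ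
    have huT : u ∈ Wset r T := wset_mono hPT huP
    have hvT : v ∈ Wset r T := wset_mono hQT hvQ
    exact ((hc hT).2.2.2.2 u huT v hvT hpre).lift id (fun a b h => ⟨T, hT, h⟩)

lemma good_max_covers {r : V} (hconn : G.Connected)
    {M : Set (V × V)} (hmax : Maximal (· ∈ Good G F r) M)
    (HF1 : ∀ x y : V, G.IsBridge s(x,y) → (F x y ↔ ¬ F y x)) :
    ∀ a b : V, G.Adj a b → (a,b) ∈ M ∨ (b,a) ∈ M := by
  classical
  by_contra hcon
  push_neg at hcon
  obtain ⟨a, b, hab, ha1, ha2⟩ := hcon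
  -- walk from r to a; find an uncovered edge touching Wset
  have key : ∃ x y : V, G.Adj x y ∧ x ∈ Wset r M ∧ (x,y) ∉ M ∧ (y,x) ∉ M := by
    obtain ⟨w⟩ := hconn.preconnected r a
    have : ∀ {u u' : V} (w : G.Walk u u'), u ∈ Wset r M →
        (∃ x y : V, G.Adj x y ∧ x ∈ Wset r M ∧ (x,y) ∉ M ∧ (y,x) ∉ M) ∨ u' ∈ Wset r M := by
      intro u u' w
      induction w with
      | nil => exact fun h => Or.inr h
      | @cons f g h' hadj w' ih =>
        intro hu
        by_cases hcov : (f, g) ∈ M ∨ (g, f) ∈ M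
        · rcases hcov with hcov | hcov
          · exact ih (mem_wset_right hcov)
          · exact ih (mem_wset_left hcov)
        · push_neg at hcov
          exact Or.inl ⟨f, g, hadj, hu, hcov.1, hcov.2⟩
    rcases this w (Set.mem_insert _ _) with h | h
    · exact h
    · exact ⟨a, b, hab, h, ha1, ha2⟩
  obtain ⟨x, y, hxy, hx, h1, h2⟩ := key
  by_cases hbr : G.IsBridge s(x,y)
  · obtain ⟨M', hM', hss⟩ := extend_bridge HF1 hmax.prop hxy hx h1 h2 hbr
    exact hss.not_subset (hmax.2 hM' hss.subset)
  · obtain ⟨M', hM', hss⟩ := extend_nonbridge hmax.prop hxy hx h1 h2 hbr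
    exact hss.not_subset (hmax.2 hM' hss.subset)

lemma orientation_exists (hconn : G.Connected)
    (HF1 : ∀ x y : V, G.IsBridge s(x,y) → (F x y ↔ ¬ F y x)) :
    ∃ D : V → V → Prop, IsOrientation G D ∧
      ∀ u v : V, Pre G F u v → Relation.ReflTransGen D u v := by
  classical
  obtain ⟨r⟩ := hconn.nonempty
  obtain ⟨M, -, hmax⟩ := zorn_subset_nonempty (Good G F r)
    (fun c hc hchain hne => ⟨⋃₀ c, good_chain c hc hchain hne,
      fun sP hs => Set.subset_sUnion_of_mem hs⟩) ∅ good_empty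
  have hcov := good_max_covers hconn hmax HF1
  obtain ⟨hM1, hM2, hM3, hM4, hM5⟩ := hmax.prop
  refine ⟨fun a b => (a,b) ∈ M, ⟨fun a b h => hM1 _ h, ?_⟩, ?_⟩
  · intro a b hadj
    constructor
    · intro h hrev
      exact hM2 _ h hrev
    · intro h
      rcases hcov a b hadj with h' | h'
      · exact h'
      · exact absurd h' h
  · intro u v hpre
    rcases eq_or_ne u v with rfl | huv
    · exact Relation.ReflTransGen.refl
    have hmem : ∀ w' tt : V, w' ≠ tt → w' ∈ Wset r M := by
      intro w' tt hnee
      obtain ⟨wk⟩ := hconn.preconnected w' tt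
      cases wk with
      | nil => exact absurd rfl hnee
      | cons h wk' =>
        rcases hcov _ _ h with h' | h'
        · exact mem_wset_left h'
        · exact mem_wset_right h'
    exact hM5 u (hmem u v huv) v (hmem v u huv.symm) hpre


/-- Hassin–Megiddo: a connected undirected graph G with demand pairs
(s_1,t_1), …, (s_k,t_k) has an orientation in which s_i can reach t_i for every i if and
only if no bridge is required to be crossed in both directions, i.e. there are no bridge
{u,v} and indices i, j such that, in G with the bridge removed, s_i and t_j lie in the
component of u while t_i and s_j lie in the component of v. -/
theorem stmt_12 (G : SimpleGraph V) (hconn : G.Connected)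
    (k : ℕ) (s t : Fin k → V) :
    (∃ D : V → V → Prop, IsOrientation G D ∧
      ∀ i, Relation.ReflTransGen D (s i) (t i)) ↔
    ¬ ∃ u v : V, G.IsBridge s(u, v) ∧ ∃ i j : Fin k,
      (G.deleteEdges {s(u, v)}).Reachable (s i) u ∧
      (G.deleteEdges {s(u, v)}).Reachable (t i) v ∧
      (G.deleteEdges {s(u, v)}).Reachable (s j) v ∧
      (G.deleteEdges {s(u, v)}).Reachable (t j) u := by
  classical
  constructor
  · rintro ⟨D, ho, hD⟩ ⟨u, v, hb, i, j, h1, h2, h3, h4⟩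
    have hadj : G.Adj u v := (isBridge_iff' G hconn |>.mp hb).1
    have hswap : s(v,u) = s(u,v) := Sym2.eq_swap
    have hDuv : D u v := cross_of_rtg G hconn ho hb h1 (hD i) h2
    have hbv : G.IsBridge s(v,u) := by rw [hswap]; exact hb
    have hDvu : D v u := cross_of_rtg G hconn ho hbv
      (by rw [hswap]; exact h3) (hD j) (by rw [hswap]; exact h4)
    exact ((ho.2 u v hadj).mp hDuv) hDvu
  · intro hno
    set F : V → V → Prop := fun a b =>
      (∃ i, (G.deleteEdges {s(a,b)}).Reachable (s i) a ∧
            (G.deleteEdges {s(a,b)}).Reachable (t i) b) ∨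
      (¬ (∃ i, (G.deleteEdges {s(a,b)}).Reachable (s i) b ∧
               (G.deleteEdges {s(a,b)}).Reachable (t i) a) ∧ WellOrderingRel a b)
      with hFdef
    have HF1 : ∀ x y : V, G.IsBridge s(x,y) → (F x y ↔ ¬ F y x) := by
      intro x y hb
      have hne : x ≠ y := (isBridge_iff' G hconn |>.mp hb).1.ne
      have hswap : s(y,x) = s(x,y) := Sym2.eq_swap
      have hnc : ¬ ((∃ i, (G.deleteEdges {s(x,y)}).Reachable (s i) x ∧
            (G.deleteEdges {s(x,y)}).Reachable (t i) y) ∧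
          (∃ j, (G.deleteEdges {s(x,y)}).Reachable (s j) y ∧
            (G.deleteEdges {s(x,y)}).Reachable (t j) x)) := by
        rintro ⟨⟨i, hi1, hi2⟩, ⟨j, hj1, hj2⟩⟩
        exact hno ⟨x, y, hb, i, j, hi1, hi2, hj1, hj2⟩
      have htri : WellOrderingRel x y ∨ x = y ∨ WellOrderingRel y x :=
        trichotomous x y
      have hasym : ¬ (WellOrderingRel x y ∧ WellOrderingRel y x) := by
        rintro ⟨hw1, hw2⟩
        exact irrefl x (_root_.trans hw1 hw2)
      rw [hFdef]
      simp only [hswap]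
      constructor
      · rintro (hA | ⟨hnB, hw⟩) (hB | ⟨hnA, hw2⟩)
        · exact hnc ⟨hA, hB⟩
        · exact hnA hA
        · exact hnB hB
        · exact hasym ⟨hw, hw2⟩
      · intro hn
        by_cases hA : (∃ i, (G.deleteEdges {s(x,y)}).Reachable (s i) x ∧
            (G.deleteEdges {s(x,y)}).Reachable (t i) y)
        · exact Or.inl hA
        · refine Or.inr ⟨fun hB => hn (Or.inl hB), ?_⟩
          rcases htri with hw | heq | hw
          · exact hw
          · exact absurd heq hne
          · exact absurd (Or.inr ⟨hA, hw⟩) hn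
    have hPre : ∀ i, Pre G F (s i) (t i) := by
      intro i a b hbip hr1 hr2
      rw [hFdef]
      exact Or.inl ⟨i, hr1, hr2⟩
    obtain ⟨D, hD, hrtg⟩ := orientation_exists hconn HF1
    exact ⟨D, hD, fun i => hrtg _ _ (hPre i)⟩
end

section
/- In the clause gadget graph G_C (Figure: a planar unweighted graph on the specified vertices with terminals (s_C,t_C), (s_C',t_C'), (s_C'',t_C'') and distinguished edges e_vC = ab, e_wC = cd, e_xC = ef), the distances satisfy d(s_C,t_C) = 3, d(s_C'',t_C'') = 3, and d(s_C',t_C') = 4; there are exactly two shortest s_C-to-t_C paths, exactly three shortest s_C'-to-t_C' paths, and exactly two shortest s_C''-to-t_C'' paths; and any three pairwise non-conflicting shortest paths connecting the three terminal pairs must use at least one of the edges ab, cd, ef in its forward direction. -/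
/-- The vertices of the clause gadget G_C: the three terminal pairs, the endpoints
a, b, c, d, e, f of the three literal edges e_vC = ab, e_wC = cd, e_xC = ef, and an
auxiliary vertex g. -/
inductive CV : Type
  | sC | tC | sC' | tC' | sC'' | tC'' | a | b | c | d | e | f | g
  deriving DecidableEq

open CV

/-- The edges of the clause gadget. -/
def clauseEdgeList : List (CV × CV) :=
  [(sC, a), (a, b), (b, tC), (sC, c), (c, d), (d, tC),
   (sC'', e), (e, f), (f, tC''), (sC'', d), (c, tC''),
   (sC', b), (a, g), (g, tC'), (sC', d), (c, g), (sC', f), (e, g)]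

/-- The (unweighted, planar) clause gadget graph G_C. -/
def GC : SimpleGraph CV :=
  SimpleGraph.fromEdgeSet {p | ∃ q ∈ clauseEdgeList, p = s(q.1, q.2)}

/-- The walk `p` uses the arc `uv`. -/
def UsesArcW {x y : CV} (p : GC.Walk x y) (u v : CV) : Prop :=
  (u, v) ∈ p.darts.map (fun d => d.toProd)

/-- Two directed walks conflict if some edge is traversed in opposite directions. -/
def ConflictW {x1 x2 y1 y2 : CV} (p : GC.Walk x1 x2) (q : GC.Walk y1 y2) : Prop :=
  ∃ u v, UsesArcW p u v ∧ UsesArcW q v u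

/-! ### Auxiliary infrastructure -/

deriving instance Repr for CV

def allCV : List CV := [sC, tC, sC', tC', sC'', tC'', a, b, c, d, e, f, g]

instance : Fintype CV :=
  ⟨⟨allCV, by decide⟩, fun x => by cases x <;> decide⟩

lemma GC_adj_iff (u v : CV) :
    GC.Adj u v ↔ ((u, v) ∈ clauseEdgeList ∨ (v, u) ∈ clauseEdgeList) ∧ u ≠ v := by
  rw [GC, SimpleGraph.fromEdgeSet_adj]
  constructor
  · rintro ⟨⟨q, hq, he⟩, hne⟩
    rw [Sym2.eq_iff] at he
    refine ⟨?_, hne⟩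
    rcases he with ⟨h1, h2⟩ | ⟨h1, h2⟩
    · left; rw [h1, h2]; exact hq
    · right; rw [h1, h2]; exact hq
  · rintro ⟨h | h, hne⟩
    · exact ⟨⟨(u, v), h, rfl⟩, hne⟩
    · exact ⟨⟨(v, u), h, Sym2.eq_swap⟩, hne⟩

instance : DecidableRel GC.Adj := fun u v => decidable_of_iff' _ (GC_adj_iff u v)

def nbrs (u : CV) : List CV := allCV.filter (fun v => decide (GC.Adj u v))

lemma mem_nbrs {u v : CV} (h : GC.Adj u v) : v ∈ nbrs u := by
  rw [nbrs, List.mem_filter]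
  exact ⟨by cases v <;> decide, decide_eq_true h⟩

def chains : ℕ → CV → List (List CV)
  | 0, x => [[x]]
  | n+1, x => (nbrs x).flatMap fun y => (chains n y).map fun l => x :: l

/-- Chains (walk supports) of length n from x ending at y. -/
def chainsT (n : ℕ) (x y : CV) : List (List CV) :=
  (chains n x).filter fun l => decide (l.getLast? = some y)

/-- Path supports of length n from x to y. -/
def chainsP (n : ℕ) (x y : CV) : List (List CV) :=
  (chainsT n x y).filter fun l => decide l.Nodup

lemma support_mem_chains : ∀ {n : ℕ} {x y : CV} (p : GC.Walk x y),
    p.length = n → p.support ∈ chains n x := by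
  intro n
  induction n with
  | zero =>
    intro x y p hp
    cases p with
    | nil => simp [chains]
    | cons h q => simp at hp
  | succ n ih =>
    intro x y p hp
    cases p with
    | nil => simp at hp
    | cons h q =>
      rw [chains, List.mem_flatMap]
      refine ⟨_, mem_nbrs h, ?_⟩
      rw [List.mem_map]
      exact ⟨q.support, ih q (by simpa using hp), rfl⟩

lemma getLast?_support {x y : CV} (p : GC.Walk x y) : p.support.getLast? = some y := by
  rw [List.getLast?_eq_getLast p.support_ne_nil]
  simp

lemma support_mem_chainsT {n : ℕ} {x y : CV} (p : GC.Walk x y)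
    (hp : p.length = n) : p.support ∈ chainsT n x y := by
  rw [chainsT, List.mem_filter]
  exact ⟨support_mem_chains p hp, decide_eq_true (getLast?_support p)⟩

lemma support_mem_chainsP {n : ℕ} {x y : CV} (p : GC.Walk x y)
    (hp : p.length = n) (hpath : p.IsPath) : p.support ∈ chainsP n x y := by
  rw [chainsP, List.mem_filter]
  exact ⟨support_mem_chainsT p hp, decide_eq_true hpath.support_nodup⟩

lemma head?_support {x y : CV} (p : GC.Walk x y) : p.support.head? = some x := by
  cases p <;> simp

lemma walk_eq_of_support_eq : ∀ {x y : CV} (p q : GC.Walk x y),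
    p.support = q.support → p = q := by
  intro x y p
  induction p with
  | nil =>
    intro q h
    cases q with
    | nil => rfl
    | cons h' q' =>
      exfalso
      cases q' <;> simp at h
  | cons h p ih =>
    intro q hq
    cases q with
    | nil =>
      exfalso
      cases p <;> simp at hq
    | cons h' q' =>
      simp only [SimpleGraph.Walk.support_cons, List.cons.injEq] at hq
      have hts := hq.2
      have hv : some _ = some _ := (head?_support p).symm.trans (by rw [hts]; exact head?_support q')
      have hv' := Option.some.inj hv
      subst hv'
      rw [ih q' hts]

/-- A walk-building step with explicit next vertex. -/
def stepC (v : CV) {u w : CV} (p : GC.Walk v w) (h : GC.Adj u v := by decide) :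
    GC.Walk u w := SimpleGraph.Walk.cons h p

/-- The two shortest sC-tC paths. -/
def A1 : GC.Walk sC tC := stepC a (stepC b (stepC tC .nil))
def A2 : GC.Walk sC tC := stepC c (stepC d (stepC tC .nil))

/-- The three shortest sC'-tC' paths. -/
def B1 : GC.Walk sC' tC' := stepC b (stepC a (stepC g (stepC tC' .nil)))
def B2 : GC.Walk sC' tC' := stepC d (stepC c (stepC g (stepC tC' .nil)))
def B3 : GC.Walk sC' tC' := stepC f (stepC e (stepC g (stepC tC' .nil)))

/-- The two shortest sC''-tC'' paths. -/
def C1 : GC.Walk sC'' tC'' := stepC d (stepC c (stepC tC'' .nil))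
def C2 : GC.Walk sC'' tC'' := stepC e (stepC f (stepC tC'' .nil))

instance {x y u v : CV} (p : GC.Walk x y) : Decidable (UsesArcW p u v) := by
  unfold UsesArcW; infer_instance

/-- in the clause gadget, d(s_C,t_C) = 3, d(s_C'',t_C'') = 3 and
d(s_C',t_C') = 4; there are exactly two shortest s_C-to-t_C paths, exactly three shortest
s_C'-to-t_C' paths and exactly two shortest s_C''-to-t_C'' paths; and any three pairwise
non-conflicting shortest paths connecting the three terminal pairs use at least one of the
literal edges ab, cd, ef in its forward direction (a→b, c→d, e→f). -/
theorem stmt_15 :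
    GC.dist sC tC = 3 ∧ GC.dist sC'' tC'' = 3 ∧ GC.dist sC' tC' = 4 ∧
    (∃ p q : GC.Walk sC tC, p ≠ q ∧ p.IsPath ∧ p.length = 3 ∧ q.IsPath ∧ q.length = 3 ∧
      ∀ r : GC.Walk sC tC, r.IsPath → r.length = 3 → r = p ∨ r = q) ∧
    (∃ p q r : GC.Walk sC' tC', p ≠ q ∧ p ≠ r ∧ q ≠ r ∧
      p.IsPath ∧ p.length = 4 ∧ q.IsPath ∧ q.length = 4 ∧ r.IsPath ∧ r.length = 4 ∧
      ∀ w : GC.Walk sC' tC', w.IsPath → w.length = 4 → w = p ∨ w = q ∨ w = r) ∧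
    (∃ p q : GC.Walk sC'' tC'', p ≠ q ∧ p.IsPath ∧ p.length = 3 ∧ q.IsPath ∧ q.length = 3 ∧
      ∀ r : GC.Walk sC'' tC'', r.IsPath → r.length = 3 → r = p ∨ r = q) ∧
    (∀ (P1 : GC.Walk sC tC) (P2 : GC.Walk sC' tC') (P3 : GC.Walk sC'' tC''),
      P1.IsPath → P1.length = 3 → P2.IsPath → P2.length = 4 → P3.IsPath → P3.length = 3 →
      ¬ ConflictW P1 P2 → ¬ ConflictW P1 P3 → ¬ ConflictW P2 P3 →
      (UsesArcW P1 a b ∨ UsesArcW P2 a b ∨ UsesArcW P3 a b ∨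
       UsesArcW P1 c d ∨ UsesArcW P2 c d ∨ UsesArcW P3 c d ∨
       UsesArcW P1 e f ∨ UsesArcW P2 e f ∨ UsesArcW P3 e f)) := by
  have classA : ∀ r : GC.Walk sC tC, r.IsPath → r.length = 3 → r = A1 ∨ r = A2 := by
    intro r hr hl
    have hm := support_mem_chainsP r hl hr
    rw [show chainsP 3 sC tC = [[sC, a, b, tC], [sC, c, d, tC]] from by decide] at hm
    simp only [List.mem_cons, List.not_mem_nil, or_false] at hm
    rcases hm with hm | hm
    · exact Or.inl (walk_eq_of_support_eq r A1 hm)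
    · exact Or.inr (walk_eq_of_support_eq r A2 hm)
  have classB : ∀ w : GC.Walk sC' tC', w.IsPath → w.length = 4 →
      w = B1 ∨ w = B2 ∨ w = B3 := by
    intro w hw hl
    have hm := support_mem_chainsP w hl hw
    rw [show chainsP 4 sC' tC' =
        [[sC', b, a, g, tC'], [sC', d, c, g, tC'], [sC', f, e, g, tC']] from by decide] at hm
    simp only [List.mem_cons, List.not_mem_nil, or_false] at hm
    rcases hm with hm | hm | hm
    · exact Or.inl (walk_eq_of_support_eq w B1 hm)
    · exact Or.inr (Or.inl (walk_eq_of_support_eq w B2 hm))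
    · exact Or.inr (Or.inr (walk_eq_of_support_eq w B3 hm))
  have classC : ∀ r : GC.Walk sC'' tC'', r.IsPath → r.length = 3 → r = C1 ∨ r = C2 := by
    intro r hr hl
    have hm := support_mem_chainsP r hl hr
    rw [show chainsP 3 sC'' tC'' = [[sC'', d, c, tC''], [sC'', e, f, tC'']] from by decide] at hm
    simp only [List.mem_cons, List.not_mem_nil, or_false] at hm
    rcases hm with hm | hm
    · exact Or.inl (walk_eq_of_support_eq r C1 hm)
    · exact Or.inr (walk_eq_of_support_eq r C2 hm)
  have distAux : ∀ (x y : CV) (n : ℕ) (p : GC.Walk x y), p.length = n →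
      (∀ m, m < n → chainsT m x y = []) → GC.dist x y = n := by
    intro x y n p hp hnone
    have hub : GC.dist x y ≤ n := hp ▸ SimpleGraph.dist_le p
    rcases Nat.lt_or_ge (GC.dist x y) n with hlt | hge
    · exfalso
      obtain ⟨q, hq⟩ := p.reachable.exists_walk_length_eq_dist
      have hm := support_mem_chainsT q rfl
      rw [hnone q.length (by omega)] at hm
      exact List.not_mem_nil hm
    · omega
  refine ⟨?_, ?_, ?_, ?_, ?_, ?_, ?_⟩
  · exact distAux sC tC 3 A1 rfl (by intro m hm; interval_cases m <;> decide)
  · exact distAux sC'' tC'' 3 C1 rfl (by intro m hm; interval_cases m <;> decide)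
  · exact distAux sC' tC' 4 B1 rfl (by intro m hm; interval_cases m <;> decide)
  · refine ⟨A1, A2, ?_, .mk' (by decide), rfl, .mk' (by decide), rfl, classA⟩
    intro h
    exact absurd (congrArg SimpleGraph.Walk.support h) (by decide)
  · refine ⟨B1, B2, B3, ?_, ?_, ?_, .mk' (by decide), rfl, .mk' (by decide), rfl,
      .mk' (by decide), rfl, classB⟩ <;>
    · intro h
      exact absurd (congrArg SimpleGraph.Walk.support h) (by decide)
  · refine ⟨C1, C2, ?_, .mk' (by decide), rfl, .mk' (by decide), rfl, classC⟩
    intro h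
    exact absurd (congrArg SimpleGraph.Walk.support h) (by decide)
  · intro P1 P2 P3 h1 hl1 _ _ _ _ _ _ _
    rcases classA P1 h1 hl1 with rfl | rfl
    · exact Or.inl (by decide)
    · exact Or.inr (Or.inr (Or.inr (Or.inl (by decide))))
end

section
/- Let x_1,...,x_h be the crossing vertices of two opposite non-conflicting shortest paths P_i and P_j (in a plane graph with positive edge lengths, endpoints on the outer face). Then the order of x_1,...,x_h along P_i is exactly the reverse of their order along P_j. -/
variable {V : Type*}

/-- Four points appear in this cyclic order around the outer face. -/
def CyclicOrder4 [CircularOrder V] (a b c d : V) : Prop :=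
  sbtw a b c ∧ sbtw b c d ∧ sbtw c d a

/-!
If `x` preceded `y` on both paths, the planarity hypothesis `hJordan` would give a third vertex
`z` ordered `x, y, z` along one path and `z, x, y` along the other. Subpaths of shortest paths
are shortest, so distances add up along each path: `d(x,z) = d(x,y) + d(y,z)` and
`d(z,y) = d(z,x) + d(x,y)`. As lengths are symmetric, this forces `d(x,y) = 0`, which is
impossible for distinct vertices and positive lengths.
-/

lemma List.eq_take_append_cons_drop {L : List V} {k : ℕ} {v : V} (h : L[k]? = some v) :
    L = L.take k ++ v :: L.drop (k + 1) := by
  obtain ⟨hk, rfl⟩ := List.getElem?_eq_some_iff.1 h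
  conv_lhs => rw [← List.take_append_drop k L, List.drop_eq_getElem_cons hk]

lemma Prec.exists_eq_append {L : List V} {x y : V} (h : Prec L x y) :
    ∃ A B C : List V, L = A ++ x :: (B ++ y :: C) := by
  obtain ⟨i, j, hij, hi, hj⟩ := h
  have hi' : (L.take j)[i]? = some x := by rwa [List.getElem?_take_of_lt hij]
  refine ⟨(L.take j).take i, (L.take j).drop (i + 1), L.drop (j + 1), ?_⟩
  conv_lhs => rw [List.eq_take_append_cons_drop hj, List.eq_take_append_cons_drop hi']
  simp

lemma Prec.trans {L : List V} (hirr : ∀ v, ¬ Prec L v v) {x y z : V}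
    (hxy : Prec L x y) (hyz : Prec L y z) : Prec L x z := by
  obtain ⟨i, j, hij, hi, hj⟩ := hxy
  obtain ⟨j', k, hjk, hj', hk⟩ := hyz
  obtain rfl : j = j' := by
    by_contra hne
    rcases Nat.lt_or_gt_of_ne hne with h | h
    exacts [hirr y ⟨j, j', h, hj, hj'⟩, hirr y ⟨j', j, h, hj', hj⟩]
  exact ⟨i, k, hij.trans hjk, hi, hk⟩

lemma prec_or_prec_of_ne {L : List V} {x y : V} (hx : x ∈ L) (hy : y ∈ L) (hxy : x ≠ y) :
    Prec L x y ∨ Prec L y x := by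
  obtain ⟨i, hi⟩ := List.mem_iff_getElem?.1 hx
  obtain ⟨j, hj⟩ := List.mem_iff_getElem?.1 hy
  rcases lt_trichotomy i j with h | rfl | h
  · exact .inl ⟨i, j, h, hi, hj⟩
  · exact absurd (Option.some_injective _ (hi.symm.trans hj)) hxy
  · exact .inr ⟨j, i, h, hj, hi⟩

section Walks

variable {G : SimpleGraph V} {ℓ : V → V → ℝ}

lemma isWalkFrom_append_cons_iff {p q : List V} {s u t : V} :
    IsWalkFrom G (p ++ u :: q) s t ↔
      IsWalkFrom G (p ++ [u]) s u ∧ IsWalkFrom G (u :: q) u t := by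
  show List.IsChain _ _ ∧ _ ↔ (List.IsChain _ _ ∧ _) ∧ (List.IsChain _ _ ∧ _)
  rw [List.isChain_split]
  simp only [List.head?_append, List.getLast?_append_cons, List.head?_cons,
    List.getLast?_singleton]
  tauto

lemma IsWalkFrom.reverse {W : List V} {s t : V} (h : IsWalkFrom G W s t) :
    IsWalkFrom G W.reverse t s := by
  obtain ⟨hc, hh, hl⟩ := h
  refine ⟨?_, ?_, ?_⟩
  · exact List.isChain_reverse.2 (List.IsChain.imp (fun _ _ hab => hab.symm) hc)
  · rwa [List.head?_reverse]
  · rwa [List.getLast?_reverse]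

@[simp] lemma wlen_nil : wlen ℓ ([] : List V) = 0 := rfl

@[simp] lemma wlen_singleton (u : V) : wlen ℓ [u] = 0 := rfl

@[simp] lemma wlen_cons_cons (u v : V) (W : List V) :
    wlen ℓ (u :: v :: W) = ℓ u v + wlen ℓ (v :: W) := by
  simp [wlen, arcs]

lemma wlen_append_cons (p : List V) (u : V) (q : List V) :
    wlen ℓ (p ++ u :: q) = wlen ℓ (p ++ [u]) + wlen ℓ (u :: q) := by
  induction p with
  | nil => simp
  | cons a p ih =>
    cases p with
    | nil => simp
    | cons b p => simp only [List.cons_append, wlen_cons_cons] at ih ⊢; rw [ih]; ring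

lemma wlen_reverse (hsym : ∀ u v, ℓ u v = ℓ v u) (W : List V) :
    wlen ℓ W.reverse = wlen ℓ W := by
  induction W with
  | nil => rfl
  | cons u W ih =>
    cases W with
    | nil => rfl
    | cons v W =>
      rw [List.reverse_cons, List.reverse_cons, List.append_assoc, List.singleton_append,
        wlen_append_cons, ← List.reverse_cons, ih]
      simp [hsym v u, add_comm]

lemma wlen_nonneg (hpos : ∀ u v, G.Adj u v → 0 < ℓ u v) :
    ∀ {W : List V}, W.IsChain G.Adj → 0 ≤ wlen ℓ W
  | [], _ | [_], _ => by simp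
  | u :: v :: W, hW => by
    rw [List.isChain_cons_cons] at hW
    rw [wlen_cons_cons]
    exact add_nonneg (hpos u v hW.1).le (wlen_nonneg hpos hW.2)

lemma wlen_cons_cons_pos (hpos : ∀ u v, G.Adj u v → 0 < ℓ u v) {u v : V} {W : List V}
    (hW : (u :: v :: W).IsChain G.Adj) : 0 < wlen ℓ (u :: v :: W) := by
  rw [List.isChain_cons_cons] at hW
  rw [wlen_cons_cons]
  exact add_pos_of_pos_of_nonneg (hpos u v hW.1) (wlen_nonneg hpos hW.2)

lemma IsWalkFrom.wlen_pos (hpos : ∀ u v, G.Adj u v → 0 < ℓ u v) {W : List V} {s t : V}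
    (hW : IsWalkFrom G W s t) (hst : s ≠ t) : 0 < wlen ℓ W := by
  obtain ⟨hc, hh, hl⟩ := hW
  obtain ⟨W, rfl⟩ := List.head?_eq_some_iff.1 hh
  cases W with
  | nil => simp_all
  | cons v W => exact wlen_cons_cons_pos hpos hc

end Walks

/-- The length of a shortest walk when one exists (`IsShortest.wlen_eq_wdist`); junk otherwise. -/
noncomputable def wdist (G : SimpleGraph V) (ℓ : V → V → ℝ) (u v : V) : ℝ :=
  sInf (wlen ℓ '' {W | IsWalkFrom G W u v})

section Shortest

variable {G : SimpleGraph V} {ℓ : V → V → ℝ}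

lemma wdist_comm (hsym : ∀ u v, ℓ u v = ℓ v u) (u v : V) :
    wdist G ℓ u v = wdist G ℓ v u := by
  have key : ∀ u v : V,
      wlen ℓ '' {W | IsWalkFrom G W u v} ⊆ wlen ℓ '' {W | IsWalkFrom G W v u} := by
    rintro u v _ ⟨W, hW, rfl⟩
    exact ⟨W.reverse, hW.reverse, wlen_reverse hsym W⟩
  rw [wdist, wdist, (key u v).antisymm (key v u)]

variable {P : List V} {s t : V}

lemma IsShortest.wlen_eq_wdist (hP : IsShortest G ℓ P s t) : wlen ℓ P = wdist G ℓ s t := by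
  have hleast : IsLeast (wlen ℓ '' {W | IsWalkFrom G W s t}) (wlen ℓ P) := by
    refine ⟨⟨P, hP.1, rfl⟩, ?_⟩
    rintro _ ⟨W, hW, rfl⟩
    exact hP.2 W hW
  exact hleast.csInf_eq.symm

lemma IsShortest.prefix {p q : List V} {u : V} (h : IsShortest G ℓ (p ++ u :: q) s t) :
    IsShortest G ℓ (p ++ [u]) s u := by
  obtain ⟨hW, hmin⟩ := h
  rw [isWalkFrom_append_cons_iff] at hW
  refine ⟨hW.1, fun W hWalk => ?_⟩
  obtain ⟨W, rfl⟩ := List.getLast?_eq_some_iff.1 hWalk.2.2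
  have := hmin (W ++ u :: q) (isWalkFrom_append_cons_iff.2 ⟨hWalk, hW.2⟩)
  rw [wlen_append_cons p, wlen_append_cons W] at this
  linarith

lemma IsShortest.suffix {p q : List V} {u : V} (h : IsShortest G ℓ (p ++ u :: q) s t) :
    IsShortest G ℓ (u :: q) u t := by
  obtain ⟨hW, hmin⟩ := h
  rw [isWalkFrom_append_cons_iff] at hW
  refine ⟨hW.2, fun W hWalk => ?_⟩
  obtain ⟨W, rfl⟩ := List.head?_eq_some_iff.1 hWalk.2.1
  have := hmin (p ++ u :: W) (isWalkFrom_append_cons_iff.2 ⟨hW.1, hWalk⟩)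
  rw [wlen_append_cons p u q, wlen_append_cons p u W] at this
  linarith

lemma IsShortest.infix {A B C : List V} {u v : V}
    (h : IsShortest G ℓ (A ++ u :: (B ++ v :: C)) s t) :
    IsShortest G ℓ (u :: (B ++ [v])) u v := by
  have h' := h.suffix
  rw [← List.cons_append] at h' ⊢
  exact h'.prefix

lemma IsShortest.not_prec_self (hpos : ∀ u v, G.Adj u v → 0 < ℓ u v)
    (hP : IsShortest G ℓ P s t) (v : V) : ¬ Prec P v v := by
  intro h
  obtain ⟨A, B, C, rfl⟩ := h.exists_eq_append
  have hloop := hP.infix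
  have hle := hloop.2 [v] ⟨List.isChain_singleton v, rfl, rfl⟩
  have hpos' : 0 < wlen ℓ (v :: (B ++ [v])) := by
    cases B <;> exact wlen_cons_cons_pos hpos hloop.1.1
  simp only [wlen_singleton] at hle
  linarith

variable {x y z : V}

lemma IsShortest.wdist_add_of_prec (hP : IsShortest G ℓ P s t) (hxy : Prec P x y) :
    wdist G ℓ s x + wdist G ℓ x y = wdist G ℓ s y := by
  obtain ⟨A, B, C, rfl⟩ := hxy.exists_eq_append
  have hsy : IsShortest G ℓ (A ++ x :: (B ++ [y])) s y := by
    simpa using (show IsShortest G ℓ ((A ++ x :: B) ++ y :: C) s t by simpa using hP).prefix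
  rw [← hsy.prefix.wlen_eq_wdist, ← hP.infix.wlen_eq_wdist, ← hsy.wlen_eq_wdist]
  exact (wlen_append_cons A x (B ++ [y])).symm

lemma IsShortest.wdist_pos_of_prec (hpos : ∀ u v, G.Adj u v → 0 < ℓ u v)
    (hP : IsShortest G ℓ P s t) (hxy : Prec P x y) : 0 < wdist G ℓ x y := by
  have hne : x ≠ y := by rintro rfl; exact hP.not_prec_self hpos x hxy
  obtain ⟨A, B, C, rfl⟩ := hxy.exists_eq_append
  rw [← hP.infix.wlen_eq_wdist]
  exact hP.infix.1.wlen_pos hpos hne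

lemma IsShortest.wdist_add_of_prec_of_prec (hpos : ∀ u v, G.Adj u v → 0 < ℓ u v)
    (hP : IsShortest G ℓ P s t) (hxy : Prec P x y) (hyz : Prec P y z) :
    wdist G ℓ x y + wdist G ℓ y z = wdist G ℓ x z := by
  have hxz := hxy.trans (hP.not_prec_self hpos) hyz
  linarith [hP.wdist_add_of_prec hxy, hP.wdist_add_of_prec hyz, hP.wdist_add_of_prec hxz]

lemma IsShortest.not_rotated_order (hℓ : PosLengths G ℓ) (hP : IsShortest G ℓ P s t)
    {Q : List V} {s' t' : V} (hQ : IsShortest G ℓ Q s' t')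
    (hxy : Prec P x y) (hyz : Prec P y z) : ¬ (Prec Q z x ∧ Prec Q x y) := by
  rintro ⟨hzx, hxy'⟩
  have hP₃ := hP.wdist_add_of_prec_of_prec hℓ.1 hxy hyz
  have hQ₃ := hQ.wdist_add_of_prec_of_prec hℓ.1 hzx hxy'
  rw [wdist_comm hℓ.2 z x, wdist_comm hℓ.2 z y] at hQ₃
  linarith [hP.wdist_pos_of_prec hℓ.1 hxy]

end Shortest

theorem stmt_19_general (G : SimpleGraph V) (ℓ : V → V → ℝ) (hℓ : PosLengths G ℓ)
    (P Q : List V) (a b c d : V)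
    (hP : IsShortest G ℓ P a b) (hQ : IsShortest G ℓ Q c d)
    (hJordan : ∀ x y, Prec P x y → Prec Q x y →
      ∃ z, (Prec Q z x ∧ Prec P y z) ∨ (Prec Q y z ∧ Prec P z x))
    (h : ℕ) (x : Fin h → V)
    (hmem : ∀ i, x i ∈ P ∧ x i ∈ Q)
    (hord : ∀ i j : Fin h, i < j → Prec P (x i) (x j)) :
    ∀ i j : Fin h, i < j → Prec Q (x j) (x i) := by
  intro i j hij
  have hPij := hord i j hij
  have hne : x i ≠ x j := by
    intro he
    rw [he] at hPij
    exact hP.not_prec_self hℓ.1 _ hPij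
  refine (prec_or_prec_of_ne (hmem i).2 (hmem j).2 hne).resolve_left fun hQij => ?_
  obtain ⟨z, ⟨hQzx, hPyz⟩ | ⟨hQyz, hPzx⟩⟩ := hJordan _ _ hPij hQij
  · exact hP.not_rotated_order hℓ hQ hPij hPyz ⟨hQzx, hQij⟩
  · exact hQ.not_rotated_order hℓ hP hQij hQyz ⟨hPzx, hPij⟩

/-- the crossing vertices x_1, …, x_h of two opposite non-conflicting shortest
paths P (from a to b) and Q (from c to d) appear along Q in exactly the reverse of their
order along P.  Planarity enters through the Jordan curve theorem fact `hJordan` used in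
the structural lemma for opposite non-conflicting shortest paths. -/
theorem stmt_19 [CircularOrder V] (G : SimpleGraph V) (ℓ : V → V → ℝ) (hℓ : PosLengths G ℓ)
    (P Q : List V) (a b c d : V)
    (hP : IsShortest G ℓ P a b) (hQ : IsShortest G ℓ Q c d)
    (hopp : CyclicOrder4 a b c d)
    (hnc : ¬ Conflict P Q)
    (hJordan : ∀ x y, Prec P x y → Prec Q x y →
      ∃ z, (Prec Q z x ∧ Prec P y z) ∨ (Prec Q y z ∧ Prec P z x))
    (h : ℕ) (x : Fin h → V) (hinj : Function.Injective x)
    (hmem : ∀ i, x i ∈ P ∧ x i ∈ Q)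
    (hord : ∀ i j : Fin h, i < j → Prec P (x i) (x j)) :
    ∀ i j : Fin h, i < j → Prec Q (x j) (x i) :=
  stmt_19_general G ℓ hℓ P Q a b c d hP hQ hJordan h x hmem hord
end
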